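/- arXiv:math/0606689 — 2 statements merged into one kernel-verified Lean document; each statement's English description precedes it below -/
import Mathlib

section
/- Let A ⊆ T be an integral extension of commutative rings. If T is a stably strong S-ring (i.e., T[X₁,...,Xₙ] is a strong S-ring for each n ≥ 1), then A is a stably strong S-ring. -/
/-!
An integral extension `A ⊆ B` has lying over, going up and incomparability. Hence contraction
does not lower heights of primes, and a prime of `A` has height at most the supremum of the heights
of the primes above it. Now let `A ⊆ B` be domains, `p` a height-one prime of `A`, and `Q` a prime
of `B[X]` over `p[X]`. Then `q = Q ∩ B` lies over `p`, so `ht q = 1`, and `q[X] ⊆ Q` both lie over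
`p[X]`, so `Q = q[X]` by incomparability. If `B` is an S-domain, `ht Q = 1` for all such `Q`, hence
`ht p[X] = 1`. Since `A/p ⊆ B/q` (for `q` over `p`) and `A[X₁,…,Xₙ] ⊆ B[X₁,…,Xₙ]` are again
integral extensions, the case of domains suffices.
-/

open Polynomial TensorProduct

/-- A ring satisfies MPC if its minimal primes are pairwise comaximal. -/
def MPC (A : Type*) [CommRing A] : Prop :=
  ∀ p ∈ minimalPrimes A, ∀ q ∈ minimalPrimes A, p ≠ q → p ⊔ q = ⊤

/-- A domain is an S-domain if every height-one prime `p` satisfies `ht (p[X]) = 1`. -/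
def IsSDomain (D : Type*) [CommRing D] [IsDomain D] : Prop :=
  ∀ p : PrimeSpectrum D, Order.height p = 1 →
    ∀ P : PrimeSpectrum D[X], P.asIdeal = p.asIdeal.map (C : D →+* D[X]) →
      Order.height P = 1

/-- A ring is a strong S-ring if the quotient by every prime is an S-domain. -/
def StrongSRing (A : Type*) [CommRing A] : Prop :=
  ∀ p : PrimeSpectrum A, IsSDomain (A ⧸ p.asIdeal)

/-- A ring is a stably strong S-ring if all polynomial rings over it in `n ≥ 1`
variables are strong S-rings. -/
def StablyStrongSRing (A : Type*) [CommRing A] : Prop :=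
  ∀ n : ℕ, 0 < n → StrongSRing (MvPolynomial (Fin n) A)

/-- A ring is locally finite dimensional (LFD) if every prime has finite height. -/
def LFD (A : Type*) [CommRing A] : Prop :=
  ∀ p : PrimeSpectrum A, Order.height p ≠ ⊤

/-- A ring is catenarian if it satisfies MPC, is LFD, and adjacent primes `P ⋖ Q`
satisfy `ht Q = ht P + 1`. -/
def Catenarian (A : Type*) [CommRing A] : Prop :=
  MPC A ∧ LFD A ∧
    ∀ P Q : PrimeSpectrum A, P ⋖ Q → Order.height Q = Order.height P + 1

/-- A ring is universally catenarian if all polynomial rings over it in `n ≥ 1`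
variables are catenarian. -/
def UniversallyCatenarian (A : Type*) [CommRing A] : Prop :=
  ∀ n : ℕ, 0 < n → Catenarian (MvPolynomial (Fin n) A)

/-- An S-ring: MPC together with the quotient by each minimal prime being an S-domain. -/
def SRing (A : Type*) [CommRing A] : Prop :=
  MPC A ∧ ∀ p : PrimeSpectrum A, p.asIdeal ∈ minimalPrimes A → IsSDomain (A ⧸ p.asIdeal)

/-- The transcendence degree of a `k`-algebra `A`: the supremum of the cardinalities
of algebraically independent subsets of `A` over `k`. -/
noncomputable def trdeg (k A : Type*) [CommRing k] [CommRing A] [Algebra k A] : Cardinal :=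
  ⨆ s : {s : Set A // AlgebraicIndependent k ((↑) : s → A)}, Cardinal.mk s.1

namespace Ideal

variable {R S : Type*} [CommRing R] [CommRing S]

lemma comap_C_map_C (I : Ideal R) : (I.map (C : R →+* R[X])).comap C = I := by
  ext a
  simp only [mem_comap, mem_map_C_iff, coeff_C]
  refine ⟨fun h ↦ by simpa using h 0, fun h n ↦ ?_⟩
  split_ifs
  exacts [h, I.zero_mem]

lemma comap_mapRingHom_map_C (f : R →+* S) (I : Ideal S) :
    (I.map (C : S →+* S[X])).comap (mapRingHom f) = (I.comap f).map C := by
  ext g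
  simp only [mem_comap, mem_map_C_iff, coe_mapRingHom, coeff_map]

lemma comap_comap_C (f : R →+* S) (Q : Ideal S[X]) :
    (Q.comap C).comap f = (Q.comap (mapRingHom f)).comap C := by
  rw [comap_comap, comap_comap, mapRingHom_comp_C]

lemma eq_map_C_comap_C_of_isIntegral [Algebra R S] [Algebra.IsIntegral R S] (p : Ideal R)
    (Q : Ideal S[X]) [Q.IsPrime] (hQ : Q.comap (mapRingHom (algebraMap R S)) = p.map C) :
    Q = (Q.comap C).map C := by
  let := Polynomial.algebra R S
  have hQ' : ((Q.comap C).map C).comap (algebraMap R[X] S[X]) =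
      Q.comap (algebraMap R[X] S[X]) := by
    rw [Polynomial.algebraMap_def, comap_mapRingHom_map_C, comap_comap_C, hQ, comap_C_map_C]
  have : ((Q.comap C).map C).IsPrime := isPrime_map_C_of_isPrime
  exact (eq_of_le_of_not_lt (map_le_iff_le_comap.mpr le_rfl) fun hlt ↦
    (IsIntegral.comap_lt_comap (R := R[X]) hlt).ne hQ').symm

end Ideal

namespace PrimeSpectrum

variable {R S : Type*} [CommRing R] [CommRing S] [Algebra R S] [Algebra.IsIntegral R S]

lemma comap_strictMono_of_isIntegral : StrictMono (comap (algebraMap R S)) := fun _ _ h ↦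
  Ideal.IsIntegral.comap_lt_comap (R := R) (asIdeal_lt_asIdeal _ _ |>.mpr h)

lemma height_le_height_comap_of_isIntegral (Q : PrimeSpectrum S) :
    Order.height Q ≤ Order.height (comap (algebraMap R S) Q) :=
  Order.height_le_height_apply_of_strictMono _ comap_strictMono_of_isIntegral Q

lemma height_le_of_forall_comap_eq_of_isIntegral [FaithfulSMul R S] (P : PrimeSpectrum R)
    {n : ℕ∞} (h : ∀ Q : PrimeSpectrum S, comap (algebraMap R S) Q = P → Order.height Q ≤ n) :
    Order.height P ≤ n := by
  refine Order.height_le fun l hl ↦ ?_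
  obtain ⟨Q₀, _, hQ₀, hQ₀l⟩ := Ideal.exists_ideal_over_prime_of_isIntegral l.head.asIdeal
    (⊥ : Ideal S) (by simp [← RingHom.ker_eq_comap_bot])
  have : Q₀.LiesOver l.head.asIdeal := ⟨hQ₀l.symm⟩
  obtain ⟨L, hlen, -, hL⟩ := Ideal.exists_ltSeries_of_hasGoingUp l Q₀
  have hlast : comap (algebraMap R S) L.last = l.last := by
    rw [← RelSeries.getLast_toList, ← RelSeries.getLast_toList]
    simp only [← hL, List.getLast_map]
  rw [← hlen]
  exact Order.length_le_height_last.trans (h _ (hlast.trans hl))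

end PrimeSpectrum

lemma PrimeSpectrum.one_le_height_iff_ne_bot {D : Type*} [CommRing D] [IsDomain D]
    {P : PrimeSpectrum D} : 1 ≤ Order.height P ↔ P ≠ ⊥ := by
  rw [Order.one_le_iff_pos, Order.height_pos, isMin_iff_eq_bot]

theorem IsSDomain.of_isIntegral {A B : Type*} [CommRing A] [CommRing B] [IsDomain A]
    [IsDomain B] [Algebra A B] [Algebra.IsIntegral A B] [FaithfulSMul A B] (hB : IsSDomain B) :
    IsSDomain A := by
  intro p hp P hP
  let := Polynomial.algebra A B
  have hp0 : p ≠ ⊥ := PrimeSpectrum.one_le_height_iff_ne_bot.mp hp.ge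
  have hP0 : P ≠ ⊥ := fun h ↦ hp0 <| PrimeSpectrum.ext <|
    (Ideal.map_eq_bot_iff_of_injective C_injective).mp (hP ▸ congrArg PrimeSpectrum.asIdeal h)
  refine le_antisymm ?_ (PrimeSpectrum.one_le_height_iff_ne_bot.mpr hP0)
  refine PrimeSpectrum.height_le_of_forall_comap_eq_of_isIntegral (S := B[X]) P fun Q hQ ↦ ?_
  have hQP : Q.asIdeal.comap (mapRingHom (algebraMap A B)) = p.asIdeal.map C :=
    hP ▸ congrArg PrimeSpectrum.asIdeal hQ
  let q : PrimeSpectrum B := PrimeSpectrum.comap C Q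
  have hqp : PrimeSpectrum.comap (algebraMap A B) q = p := PrimeSpectrum.ext <| by
    rw [PrimeSpectrum.comap_asIdeal, PrimeSpectrum.comap_asIdeal, Ideal.comap_comap_C, hQP,
      Ideal.comap_C_map_C]
  have hq0 : q ≠ ⊥ := fun hq0 ↦ hp0 <| hqp.symm.trans <| PrimeSpectrum.ext <|
    hq0 ▸ Ideal.comap_bot_of_injective _ (FaithfulSMul.algebraMap_injective A B)
  have hq : Order.height q = 1 :=
    le_antisymm (hp ▸ hqp ▸ PrimeSpectrum.height_le_height_comap_of_isIntegral q)
      (PrimeSpectrum.one_le_height_iff_ne_bot.mpr hq0)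
  exact (hB q hq Q (Ideal.eq_map_C_comap_C_of_isIntegral p.asIdeal Q.asIdeal hQP)).le

theorem StrongSRing.of_isIntegral {A B : Type*} [CommRing A] [CommRing B] [Algebra A B]
    [Algebra.IsIntegral A B] [FaithfulSMul A B] (hB : StrongSRing B) : StrongSRing A := by
  intro p
  obtain ⟨Q, -, hQ, hQp⟩ := Ideal.exists_ideal_over_prime_of_isIntegral p.asIdeal
    (⊥ : Ideal B) (by simp [← RingHom.ker_eq_comap_bot])
  have : Q.LiesOver p.asIdeal := ⟨hQp.symm⟩
  exact (hB ⟨Q, hQ⟩).of_isIntegral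

/-- The stably strong S-property descends along integral ring
extensions. -/
theorem stmt4 {A T : Type*} [CommRing A] [CommRing T] (f : A →+* T)
    (hinj : Function.Injective f) (hint : f.IsIntegral)
    (hT : StablyStrongSRing T) : StablyStrongSRing A := by
  let := f.toAlgebra
  have : Algebra.IsIntegral A T := ⟨hint⟩
  have : FaithfulSMul A T := (faithfulSMul_iff_algebraMap_injective A T).mpr hinj
  intro n hn
  let := MvPolynomial.algebraMvPolynomial (σ := Fin n) (R := A) (S := T)
  exact (hT n hn).of_isIntegral
end

section
/- Let A be a k-algebra and K an algebraic field extension of k. If K ⊗_k A is catenarian, then A is catenarian. -/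
open Polynomial TensorProduct

/-! The primes of `K ⊗[k] A ≅ A ⊗[k] K` map onto those of `A`: the extension is integral because
`K/k` is algebraic, and faithfully flat because `K` is free over `k`. Integrality makes the map on
spectra strictly monotone (incomparability), flatness gives going down. Such a map preserves
heights, and lifts covering pairs as well as pairs of minimal primes under a common prime; since
each condition in the definition of catenarity is a statement about exactly these data, it
descends from `K ⊗[k] A` to `A`. -/

section GoingDown

variable {α β : Type*} [PartialOrder α] [PartialOrder β] {f : α → β}

theorem exists_le_apply_eq_of_goingDown (hgd : ∀ a b, b < f a → ∃ a' < a, f a' = b) {a : α}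
    {b : β} (hb : b ≤ f a) : ∃ a' ≤ a, f a' = b := by
  obtain rfl | hlt := hb.eq_or_lt
  · exact ⟨a, le_rfl, rfl⟩
  · obtain ⟨a', ha', rfl⟩ := hgd a b hlt
    exact ⟨a', ha'.le, rfl⟩

theorem exists_covBy_apply_eq_of_goingDown (hf : StrictMono f) (hsurj : Function.Surjective f)
    (hgd : ∀ a b, b < f a → ∃ a' < a, f a' = b) {b₁ b₂ : β} (hb : b₁ ⋖ b₂) :
    ∃ a₁ a₂, a₁ ⋖ a₂ ∧ f a₁ = b₁ ∧ f a₂ = b₂ := by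
  obtain ⟨a₂, rfl⟩ := hsurj b₂
  obtain ⟨a₁, hlt, rfl⟩ := hgd a₂ b₁ hb.lt
  exact ⟨a₁, a₂, ⟨hlt, fun c h₁ h₂ => hb.2 (hf h₁) (hf h₂)⟩, rfl, rfl⟩

end GoingDown

theorem mpc_iff_isMin {A : Type*} [CommRing A] :
    MPC A ↔ ∀ p q r : PrimeSpectrum A, IsMin p → IsMin q → p ≤ r → q ≤ r → p = q := by
  constructor
  · intro h p q r hp hq hpr hqr
    by_contra hne
    have htop := h _ (PrimeSpectrum.isMin_iff.mp hp) _ (PrimeSpectrum.isMin_iff.mp hq)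
      (hne ∘ PrimeSpectrum.ext)
    exact r.isPrime.ne_top (top_le_iff.mp (htop ▸ sup_le hpr hqr))
  · intro h p hp q hq hne
    by_contra hsup
    obtain ⟨m, hm, hle⟩ := Ideal.exists_le_maximal _ hsup
    have := h ⟨p, hp.1.1⟩ ⟨q, hq.1.1⟩ ⟨m, hm.isPrime⟩ (PrimeSpectrum.isMin_iff.mpr hp)
      (PrimeSpectrum.isMin_iff.mpr hq) (le_sup_left.trans hle) (le_sup_right.trans hle)
    exact hne congr(($this).asIdeal)

theorem Catenarian.of_strictMono_of_surjective {A B : Type*} [CommRing A] [CommRing B]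
    {φ : PrimeSpectrum B → PrimeSpectrum A} (hφ : StrictMono φ) (hsurj : Function.Surjective φ)
    (hgd : ∀ P p, p < φ P → ∃ P' < P, φ P' = p) (h : Catenarian B) : Catenarian A := by
  obtain ⟨hmpc, hlfd, hcov⟩ := h
  have height_eq (P : PrimeSpectrum B) : Order.height (φ P) = Order.height P :=
    (Order.height_eq_of_strictMono φ hφ hgd P).symm
  refine ⟨?_, fun p => ?_, fun p q hpq => ?_⟩
  · rw [mpc_iff_isMin] at hmpc ⊢
    intro p q r hp hq hpr hqr
    obtain ⟨R, rfl⟩ := hsurj r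
    obtain ⟨P, hPR, rfl⟩ := exists_le_apply_eq_of_goingDown hgd hpr
    obtain ⟨Q, hQR, rfl⟩ := exists_le_apply_eq_of_goingDown hgd hqr
    rw [hmpc P Q R (hφ.isMin_of_apply hp) (hφ.isMin_of_apply hq) hPR hQR]
  · obtain ⟨P, rfl⟩ := hsurj p
    exact height_eq P ▸ hlfd P
  · obtain ⟨P, Q, hPQ, rfl, rfl⟩ := exists_covBy_apply_eq_of_goingDown hφ hsurj hgd hpq
    rw [height_eq, height_eq, hcov P Q hPQ]

theorem Catenarian.of_ringEquiv {A B : Type*} [CommRing A] [CommRing B] (e : A ≃+* B)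
    (h : Catenarian A) : Catenarian B :=
  let φ := PrimeSpectrum.comapEquiv e
  h.of_strictMono_of_surjective φ.strictMono φ.surjective
    fun _ p hp => ⟨φ.symm p, φ.symm_apply_lt.mpr hp, φ.apply_symm_apply p⟩

theorem Catenarian.of_isIntegral_of_hasGoingDown (A B : Type*) [CommRing A] [CommRing B]
    [Algebra A B] [Algebra.IsIntegral A B] [Algebra.HasGoingDown A B] [FaithfulSMul A B]
    (h : Catenarian B) : Catenarian A :=
  h.of_strictMono_of_surjective (φ := PrimeSpectrum.comap (algebraMap A B))
    (fun _ _ hPQ => Ideal.IsIntegral.comap_lt_comap hPQ)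
    (Algebra.IsIntegral.comap_surjective A B)
    fun P p hp => by
      obtain ⟨P', hP'P, hP', hP'p⟩ :=
        Ideal.exists_ideal_lt_liesOver_of_lt (p := p.asIdeal) (q := P.asIdeal.under A) P.asIdeal hp
      exact ⟨⟨P', hP'⟩, hP'P, PrimeSpectrum.ext hP'p.over.symm⟩

theorem stmt15_general {k K A : Type*} [Field k] [Field K] [Algebra k K]
    [Algebra.IsAlgebraic k K] [CommRing A] [Algebra k A]
    (h : Catenarian (K ⊗[k] A)) : Catenarian A :=
  Catenarian.of_isIntegral_of_hasGoingDown A (A ⊗[k] K)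
    (h.of_ringEquiv (Algebra.TensorProduct.comm k K A).toRingEquiv)

/-- If `K/k` is an algebraic field extension and `K ⊗ₖ A` is
catenarian, then `A` is catenarian. -/
theorem stmt15 {k K A : Type*} [Field k] [Field K] [Algebra k K]
    [Algebra.IsAlgebraic k K] [CommRing A] [Nontrivial A] [Algebra k A]
    (h : Catenarian (K ⊗[k] A)) : Catenarian A :=
  stmt15_general h
end
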